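/- With the notation of the residue computation (w = e^{2πiy}, a(w) = 2+κγ(1+w̄), Θ as the ratio iΩ/((1+κγ)Λ - iΩ)), the integrals J(y) = ∫_{-1/2}^{1/2} Θ(y-x,x) e^{-2πix}(1-e^{2πiy}) dx and I(y) = ∫_{-1/2}^{1/2} Θ(y-x,x) dx satisfy J(y) = 2(1+κγ)·((1-w)/(w·a(w)))·I(y). -/

import Mathlib

/-!
Write `e t = exp (2πit)`, `w = e y` and `S x = e x + w e(-x)`. Along the line `k + ℓ = y`
both `Λ` and `iΩ` are affine in `S`: `iΩ = (1 - w̄) S` and `(1+κγ) Λ - iΩ = 4(1+κγ) - a(w) S`,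
so `a(w) Θ S = 4(1+κγ) Θ - (1 - w̄) S`. Integrating over a period kills `S`, and the symmetry
`Θ(k,ℓ) = Θ(ℓ,k)` together with the substitution `x ↦ y - x` turns `∫ Θ e(x)` into `w ∫ Θ e(-x)`.
Hence `2 w a(w) ∫ Θ e(-x) = 4(1+κγ) ∫ Θ`, which is the claim since `Re a(w) ≥ 2`.
-/

open Real MeasureTheory

noncomputable def Lam (k l : ℝ) : ℝ := 4 * (Real.sin (π * k) ^ 2 + Real.sin (π * l) ^ 2)

noncomputable def Om (k l : ℝ) : ℝ := 2 * (Real.sin (2 * π * k) + Real.sin (2 * π * l))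

noncomputable def Theta (a : ℝ) (k l : ℝ) : ℂ :=
  (Complex.I * ((Om k l : ℝ) : ℂ)) /
    (((1 + a : ℝ) : ℂ) * ((Lam k l : ℝ) : ℂ) - Complex.I * ((Om k l : ℝ) : ℂ))

noncomputable def aFn (a : ℝ) (w : ℂ) : ℂ := 2 + (a : ℂ) * (1 + (starRingEnd ℂ) w)

theorem Function.Periodic.intervalIntegral_comp_const_sub {E : Type*} [NormedAddCommGroup E]
    [NormedSpace ℝ E] {f : ℝ → E} {T : ℝ} (hf : Function.Periodic f T) (c t : ℝ) :
    ∫ x in t..t + T, f (c - x) = ∫ x in t..t + T, f x := by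
  rw [intervalIntegral.integral_comp_sub_left, ← hf.intervalIntegral_add_eq (c - (t + T)) t]
  ring_nf

noncomputable def expTwoPiI (t : ℝ) : ℂ := Complex.exp (2 * π * Complex.I * t)

local notation "e" => expTwoPiI

section expTwoPiI

theorem expTwoPiI_add (s t : ℝ) : e (s + t) = e s * e t := by
  simp only [expTwoPiI, ← Complex.exp_add]; push_cast; ring_nf

theorem expTwoPiI_ne_zero (t : ℝ) : e t ≠ 0 := Complex.exp_ne_zero _

theorem expTwoPiI_neg_mul_self (t : ℝ) : e (-t) * e t = 1 := by
  rw [← expTwoPiI_add, neg_add_cancel, expTwoPiI]; simp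

theorem expTwoPiI_sub (s t : ℝ) : e (s - t) = e s * e (-t) := by
  rw [sub_eq_add_neg, expTwoPiI_add]

theorem expTwoPiI_add_one (t : ℝ) : e (t + 1) = e t := by
  have he1 : e 1 = 1 := by simp [expTwoPiI]
  rw [expTwoPiI_add, he1, mul_one]

theorem expTwoPiI_eq_exp_mul_I (t : ℝ) : e t = Complex.exp ((2 * π * t : ℝ) * Complex.I) := by
  rw [expTwoPiI]; push_cast; ring_nf

theorem expTwoPiI_eq_cos_add_sin_mul_I (t : ℝ) :
    e t = Real.cos (2 * π * t) + Real.sin (2 * π * t) * Complex.I := by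
  rw [expTwoPiI_eq_exp_mul_I, Complex.exp_mul_I]; push_cast; ring

theorem conj_expTwoPiI (t : ℝ) : starRingEnd ℂ (e t) = e (-t) := by
  simp only [expTwoPiI, ← Complex.exp_conj, map_mul, Complex.conj_ofReal, Complex.conj_I,
    map_ofNat]
  push_cast; ring_nf

theorem norm_expTwoPiI (t : ℝ) : ‖e t‖ = 1 := by
  rw [expTwoPiI_eq_exp_mul_I, Complex.norm_exp_ofReal_mul_I]

@[fun_prop]
theorem continuous_expTwoPiI : Continuous e := by
  unfold expTwoPiI; fun_prop

theorem integral_expTwoPiI (t : ℝ) : ∫ x in t..t + 1, e x = 0 := by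
  have h2πi : 2 * (π : ℂ) * Complex.I ≠ 0 := by simp [Real.pi_ne_zero]
  simp only [expTwoPiI]
  rw [integral_exp_mul_complex h2πi, ← expTwoPiI, ← expTwoPiI, expTwoPiI_add_one, sub_self,
    zero_div]

theorem integral_expTwoPiI_neg (t : ℝ) : ∫ x in t..t + 1, e (-x) = 0 := by
  rw [intervalIntegral.integral_comp_neg, show -t = -(t + 1) + 1 by ring, integral_expTwoPiI]

end expTwoPiI

theorem I_mul_ofReal_Om (k l : ℝ) : Complex.I * (Om k l : ℂ) = e k - e (-k) + (e l - e (-l)) := by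
  simp only [expTwoPiI_eq_cos_add_sin_mul_I, Om, mul_neg, Real.cos_neg, Real.sin_neg]
  push_cast; ring

theorem ofReal_Lam (k l : ℝ) : (Lam k l : ℂ) = 4 - (e k + e (-k)) - (e l + e (-l)) := by
  simp only [expTwoPiI_eq_cos_add_sin_mul_I, Lam, mul_neg, Real.cos_neg, Real.sin_neg,
    Real.sin_sq_eq_half_sub, ← mul_assoc]
  push_cast; ring

theorem Theta_comm (a k l : ℝ) : Theta a k l = Theta a l k := by
  simp only [Theta, Om, Lam, add_comm]

theorem Theta_sub_one_add_one (a k l : ℝ) : Theta a (k - 1) (l + 1) = Theta a k l := by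
  have hOm : Om (k - 1) (l + 1) = Om k l := by
    simp only [Om, mul_sub, mul_add, mul_one, Real.sin_sub_two_pi, Real.sin_add_two_pi]
  have hLam : Lam (k - 1) (l + 1) = Lam k l := by
    simp only [Lam, mul_sub, mul_add, mul_one, Real.sin_sub_pi, Real.sin_add_pi, neg_sq]
  rw [Theta, Theta, hOm, hLam]

section antidiagonal

variable (a y : ℝ)

noncomputable def antidiagSum (x : ℝ) : ℂ := e x + e y * e (-x)

theorem I_mul_ofReal_Om_antidiag (x : ℝ) :
    Complex.I * (Om (y - x) x : ℂ) = (1 - e (-y)) * antidiagSum y x := by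
  rw [I_mul_ofReal_Om, neg_sub, expTwoPiI_sub, expTwoPiI_sub, antidiagSum]
  linear_combination e (-x) * expTwoPiI_neg_mul_self y

theorem ofReal_Lam_antidiag (x : ℝ) : (Lam (y - x) x : ℂ) = 4 - (1 + e (-y)) * antidiagSum y x := by
  rw [ofReal_Lam, neg_sub, expTwoPiI_sub, expTwoPiI_sub, antidiagSum]
  linear_combination e (-x) * expTwoPiI_neg_mul_self y

theorem aFn_expTwoPiI : aFn a (e y) = 2 + a * (1 + e (-y)) := by
  rw [aFn, conj_expTwoPiI]

theorem denom_antidiag (x : ℝ) :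
    ((1 + a : ℝ) : ℂ) * (Lam (y - x) x : ℂ) - Complex.I * (Om (y - x) x : ℂ)
      = 4 * (1 + a) - aFn a (e y) * antidiagSum y x := by
  rw [ofReal_Lam_antidiag, I_mul_ofReal_Om_antidiag, aFn_expTwoPiI]
  push_cast; ring

theorem aFn_mul_Theta_mul_antidiagSum (x : ℝ)
    (hD : ((1 + a : ℝ) : ℂ) * (Lam (y - x) x : ℂ) - Complex.I * (Om (y - x) x : ℂ) ≠ 0) :
    aFn a (e y) * (Theta a (y - x) x * antidiagSum y x)
      = 4 * (1 + a) * Theta a (y - x) x - (1 - e (-y)) * antidiagSum y x := by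
  have hΘ : Theta a (y - x) x * (((1 + a : ℝ) : ℂ) * (Lam (y - x) x : ℂ)
      - Complex.I * (Om (y - x) x : ℂ)) = Complex.I * (Om (y - x) x : ℂ) :=
    div_mul_cancel₀ _ hD
  rw [denom_antidiag, I_mul_ofReal_Om_antidiag] at hΘ
  linear_combination -hΘ

theorem continuous_Theta_antidiag
    (hden : ∀ x : ℝ,
      ((1 + a : ℝ) : ℂ) * (Lam (y - x) x : ℂ) - Complex.I * (Om (y - x) x : ℂ) ≠ 0) :
    Continuous fun x => Theta a (y - x) x := by
  simp only [Theta]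
  exact Continuous.div (by simp only [Om]; fun_prop) (by simp only [Om, Lam]; fun_prop) hden

theorem integral_Theta_mul_expTwoPiI (t : ℝ) :
    ∫ x in t..t + 1, Theta a (y - x) x * e x
      = e y * ∫ x in t..t + 1, Theta a (y - x) x * e (-x) := by
  have hper : Function.Periodic (fun x => Theta a (y - x) x * e x) 1 := fun x => by
    dsimp only
    rw [show y - (x + 1) = y - x - 1 by ring, Theta_sub_one_add_one, expTwoPiI_add_one]
  rw [← hper.intervalIntegral_comp_const_sub y, ← intervalIntegral.integral_const_mul]
  refine intervalIntegral.integral_congr fun x _ => ?_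
  rw [sub_sub_cancel, Theta_comm, expTwoPiI_sub]
  ring

theorem integral_antidiagSum (t : ℝ) : ∫ x in t..t + 1, antidiagSum y x = 0 := by
  simp only [antidiagSum]
  rw [intervalIntegral.integral_add (continuous_expTwoPiI.intervalIntegrable _ _)
      ((by fun_prop : Continuous fun x => e y * e (-x)).intervalIntegrable _ _),
    intervalIntegral.integral_const_mul,
    integral_expTwoPiI, integral_expTwoPiI_neg, mul_zero, add_zero]

theorem aFn_mul_integral_Theta_mul_expTwoPiI_neg
    (hden : ∀ x : ℝ,
      ((1 + a : ℝ) : ℂ) * (Lam (y - x) x : ℂ) - Complex.I * (Om (y - x) x : ℂ) ≠ 0) (t : ℝ) :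
    aFn a (e y) * (2 * e y * ∫ x in t..t + 1, Theta a (y - x) x * e (-x))
      = 4 * (1 + a) * ∫ x in t..t + 1, Theta a (y - x) x := by
  have hΘ := continuous_Theta_antidiag a y hden
  have hS : Continuous (antidiagSum y) := by unfold antidiagSum; fun_prop
  have hΘS : ∫ x in t..t + 1, Theta a (y - x) x * antidiagSum y x
      = 2 * e y * ∫ x in t..t + 1, Theta a (y - x) x * e (-x) := by
    simp only [antidiagSum, mul_add, mul_left_comm _ (e y)]
    rw [intervalIntegral.integral_add, intervalIntegral.integral_const_mul,
      integral_Theta_mul_expTwoPiI]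
    · ring
    all_goals exact Continuous.intervalIntegrable (by fun_prop) _ _
  calc aFn a (e y) * (2 * e y * ∫ x in t..t + 1, Theta a (y - x) x * e (-x))
      = ∫ x in t..t + 1, aFn a (e y) * (Theta a (y - x) x * antidiagSum y x) := by
        rw [intervalIntegral.integral_const_mul, hΘS]
    _ = ∫ x in t..t + 1, (4 * (1 + a) * Theta a (y - x) x - (1 - e (-y)) * antidiagSum y x) :=
        intervalIntegral.integral_congr fun x _ => aFn_mul_Theta_mul_antidiagSum a y x (hden x)
    _ = 4 * (1 + a) * ∫ x in t..t + 1, Theta a (y - x) x := by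
        rw [intervalIntegral.integral_sub ((hΘ.intervalIntegrable _ _).const_mul _)
            ((hS.intervalIntegrable _ _).const_mul _),
          intervalIntegral.integral_const_mul, intervalIntegral.integral_const_mul,
          integral_antidiagSum, mul_zero, sub_zero]

end antidiagonal

theorem aFn_ne_zero {a : ℝ} (ha : 0 ≤ a) {w : ℂ} (hw : ‖w‖ ≤ 1) : aFn a w ≠ 0 := by
  have hwre : -1 ≤ w.re := by linarith [neg_abs_le w.re, Complex.abs_re_le_norm w]
  have hre : (aFn a w).re = 2 + a * (1 + w.re) := by simp [aFn]
  intro h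
  rw [h, Complex.zero_re] at hre
  nlinarith

theorem stmt_12_general (κ γ : ℝ) (hκ : 0 ≤ κ) (hγ : 0 ≤ γ) (y : ℝ)
    (hden : ∀ x : ℝ,
      ((1 + κ * γ : ℝ) : ℂ) * ((Lam (y - x) x : ℝ) : ℂ)
        - Complex.I * ((Om (y - x) x : ℝ) : ℂ) ≠ 0)
    (w : ℂ) (hw : w = Complex.exp (2 * (π : ℂ) * Complex.I * (y : ℂ))) :
    (∫ x in (-(1:ℝ)/2)..(1/2), Theta (κ * γ) (y - x) x
        * Complex.exp (-(2 * (π : ℂ) * Complex.I * (x : ℂ))) * (1 - w))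
      = 2 * (1 + (κ * γ : ℝ)) * ((1 - w) / (w * aFn (κ * γ) w))
          * (∫ x in (-(1:ℝ)/2)..(1/2), Theta (κ * γ) (y - x) x) := by
  obtain rfl : w = e y := hw
  have hexp (x : ℝ) : Complex.exp (-(2 * (π : ℂ) * Complex.I * x)) = e (-x) := by
    simp [expTwoPiI, mul_neg]
  have haFn := aFn_ne_zero (mul_nonneg hκ hγ) (norm_expTwoPiI y).le
  have key := aFn_mul_integral_Theta_mul_expTwoPiI_neg (κ * γ) y hden (-1 / 2)
  simp_rw [hexp]
  rw [show (-1 / 2 + 1 : ℝ) = 1 / 2 by norm_num] at key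
  rw [intervalIntegral.integral_mul_const]
  generalize ∫ x in (-(1:ℝ)/2)..(1/2), Theta (κ * γ) (y - x) x * e (-x) = J at key ⊢
  generalize ∫ x in (-(1:ℝ)/2)..(1/2), Theta (κ * γ) (y - x) x = I at key ⊢
  field_simp [expTwoPiI_ne_zero]
  linear_combination (1 - e y) / 2 * key

/-- `J(y) = 2(1+κγ)((1-w)/(w a(w))) I(y)`. -/
theorem stmt_12 (κ γ : ℝ) (hκ : 0 ≤ κ) (hγ : 0 ≤ γ) (y : ℝ)
    (hy : y ∈ Set.Icc (-(1:ℝ)/2) (1/2)) (hy0 : y ≠ 0)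
    (hden : ∀ x : ℝ,
      ((1 + κ * γ : ℝ) : ℂ) * ((Lam (y - x) x : ℝ) : ℂ)
        - Complex.I * ((Om (y - x) x : ℝ) : ℂ) ≠ 0)
    (w : ℂ) (hw : w = Complex.exp (2 * (π : ℂ) * Complex.I * (y : ℂ))) :
    (∫ x in (-(1:ℝ)/2)..(1/2), Theta (κ * γ) (y - x) x
        * Complex.exp (-(2 * (π : ℂ) * Complex.I * (x : ℂ))) * (1 - w))
      = 2 * (1 + (κ * γ : ℝ)) * ((1 - w) / (w * aFn (κ * γ) w))
          * (∫ x in (-(1:ℝ)/2)..(1/2), Theta (κ * γ) (y - x) x) :=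
  stmt_12_general κ γ hκ hγ y hden w hw
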